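/- arXiv:1304.5830 — 5 statements merged into one kernel-verified Lean document; each statement's English description precedes it below -/
import Mathlib

section
/- Let $n \ge 0$ be an integer and let $q, b$ be complex numbers such that $(-b;q)_{n-k+1} \ne 0$ and $(-bq;q)_k \ne 0$ for all $0 \le k \le n$, and (in the even case) $(-bq;q)_n(1-b^2q^n) \ne 0$. Then $\sum_{k=0}^{n} (-1)^k \frac{(b;q)_k (b;q)_{n-k}}{(-b;q)_{n-k+1} (-bq;q)_k}$ equals $\frac{(b;q)_{n+1}}{(-bq;q)_n (1-b^2 q^n)}$ if $n$ is even, and equals $0$ if $n$ is odd. -/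
set_option autoImplicit false

/-- The q-shifted factorial `(a;q)_n = ∏_{j=0}^{n-1} (1 - a q^j)`. -/
noncomputable def qPoch (q a : ℂ) (n : ℕ) : ℂ := ∏ j ∈ Finset.range n, (1 - a * q ^ j)

lemma qPoch_zero (q a : ℂ) : qPoch q a 0 = 1 := Finset.prod_range_zero _

lemma qPoch_succ (q a : ℂ) (n : ℕ) :
    qPoch q a (n + 1) = qPoch q a n * (1 - a * q ^ n) := Finset.prod_range_succ _ _

lemma qPoch_neg_succ (q b : ℂ) (m : ℕ) :
    qPoch q (-b) (m + 1) = (1 + b) * qPoch q (-(b * q)) m := by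
  unfold qPoch
  rw [Finset.prod_range_succ']
  have h : ∏ x ∈ Finset.range m, (1 - -b * q ^ (x + 1))
      = ∏ x ∈ Finset.range m, (1 - -(b * q) * q ^ x) :=
    Finset.prod_congr rfl fun j _ => by ring
  rw [h, mul_comm]
  norm_num

/-- Antisymmetry: the basic sum vanishes for odd `n`. -/
lemma sum_odd_zero (u : ℕ → ℂ) (n : ℕ) (hn : n % 2 = 1) :
    ∑ k ∈ Finset.range (n + 1), (-1 : ℂ) ^ k * u k * u (n - k) = 0 := by
  have hrefl := Finset.sum_range_reflect (fun k => (-1 : ℂ) ^ k * u k * u (n - k)) (n + 1)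
  simp only [Nat.add_sub_cancel] at hrefl
  have hneg : ∑ k ∈ Finset.range (n + 1), (-1 : ℂ) ^ k * u k * u (n - k)
      = -∑ k ∈ Finset.range (n + 1), (-1 : ℂ) ^ k * u k * u (n - k) := by
    conv_lhs => rw [← hrefl]
    rw [← Finset.sum_neg_distrib]
    apply Finset.sum_congr rfl
    intro j hj
    have hjn : j ≤ n := by
      have := Finset.mem_range.mp hj; omega
    have h1 : (-1 : ℂ) ^ (n - j) * (-1 : ℂ) ^ j = -1 := by
      rw [← pow_add, Nat.sub_add_cancel hjn]
      exact Odd.neg_one_pow ⟨n / 2, by omega⟩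
    have h2 : (-1 : ℂ) ^ j * (-1 : ℂ) ^ j = 1 := by
      rw [← pow_add]
      exact Even.neg_one_pow ⟨j, rfl⟩
    have h3 : (-1 : ℂ) ^ (n - j) = -(-1 : ℂ) ^ j := by
      calc (-1 : ℂ) ^ (n - j) = (-1 : ℂ) ^ (n - j) * ((-1 : ℂ) ^ j * (-1 : ℂ) ^ j) := by
            rw [h2, mul_one]
        _ = ((-1 : ℂ) ^ (n - j) * (-1 : ℂ) ^ j) * (-1 : ℂ) ^ j := by ring
        _ = -(-1 : ℂ) ^ j := by rw [h1]; ring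
    rw [Nat.sub_sub_self hjn, h3]
    ring
  linear_combination hneg / 2

lemma key_even (q b : ℂ) (u : ℕ → ℂ) (m : ℕ) (hm : m % 2 = 1)
    (hu0 : u 0 = 1)
    (hu : ∀ k ≤ m, (1 + b * q ^ (k + 1)) * u (k + 1) = (1 - b * q ^ k) * u k) :
    (∑ k ∈ Finset.range (m + 2), (-1 : ℂ) ^ k * u k * u (m + 1 - k)) * (1 - b ^ 2 * q ^ (m + 1))
      = (1 + b) * u (m + 1) * (1 - b * q ^ (m + 1)) := by
  set A' := ∑ k ∈ Finset.range (m + 2), (-1 : ℂ) ^ k * u k * u (m + 1 - k) with hA'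
  set D' := ∑ k ∈ Finset.range (m + 2), (-1 : ℂ) ^ k * q ^ k * u k * u (m + 1 - k) with hD'
  set D := ∑ k ∈ Finset.range (m + 1), (-1 : ℂ) ^ k * q ^ k * u k * u (m - k) with hD
  have hA : ∑ k ∈ Finset.range (m + 1), (-1 : ℂ) ^ k * u k * u (m - k) = 0 := sum_odd_zero u m hm
  have hm1 : (-1 : ℂ) ^ (m + 1) = 1 := Even.neg_one_pow ⟨(m + 1) / 2, by omega⟩
  -- Identity II
  have hII : A' + b * D' - (1 + b) * u (m + 1) = b * D := by
    have e1 : ∑ k ∈ Finset.range (m + 2), (-1 : ℂ) ^ k * (1 + b * q ^ k) * u k * u (m + 1 - k)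
        = A' + b * D' := by
      rw [hA', hD', Finset.mul_sum, ← Finset.sum_add_distrib]
      exact Finset.sum_congr rfl fun k _ => by ring
    have e3 : ∑ k ∈ Finset.range (m + 1),
          (-1 : ℂ) ^ (k + 1) * (1 + b * q ^ (k + 1)) * u (k + 1) * u (m + 1 - (k + 1))
        = ∑ k ∈ Finset.range (m + 1), -((-1 : ℂ) ^ k * (1 - b * q ^ k) * u k * u (m - k)) := by
      apply Finset.sum_congr rfl
      intro k hk
      have hk' : k ≤ m := by have := Finset.mem_range.mp hk; omega
      have hsub : m + 1 - (k + 1) = m - k := by omega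
      rw [hsub]
      linear_combination ((-1 : ℂ) ^ (k + 1) * u (m - k)) * hu k hk'
    have e4 : ∑ k ∈ Finset.range (m + 1), (-1 : ℂ) ^ k * (1 - b * q ^ k) * u k * u (m - k)
        = (∑ k ∈ Finset.range (m + 1), (-1 : ℂ) ^ k * u k * u (m - k)) - b * D := by
      rw [hD, Finset.mul_sum, ← Finset.sum_sub_distrib]
      exact Finset.sum_congr rfl fun k _ => by ring
    have e5 : A' + b * D'
        = (∑ k ∈ Finset.range (m + 1),
            (-1 : ℂ) ^ (k + 1) * (1 + b * q ^ (k + 1)) * u (k + 1) * u (m + 1 - (k + 1)))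
          + (1 + b) * u (m + 1) := by
      rw [← e1, Finset.sum_range_succ']
      simp only [pow_zero, mul_one, one_mul, Nat.sub_zero, hu0]
    rw [e3, Finset.sum_neg_distrib, e4, hA] at e5
    rw [e5]; ring
  -- Identity III
  have hIII : D' - q ^ (m + 1) * u (m + 1) + b * q ^ (m + 1) * (A' - u (m + 1)) = D := by
    have t1 : ∑ k ∈ Finset.range (m + 1),
          (-1 : ℂ) ^ k * q ^ k * u k * ((1 + b * q ^ (m + 1 - k)) * u (m + 1 - k))
        = ∑ k ∈ Finset.range (m + 1),
          ((-1 : ℂ) ^ k * q ^ k * u k * u (m - k)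
            - b * q ^ m * ((-1 : ℂ) ^ k * u k * u (m - k))) := by
      apply Finset.sum_congr rfl
      intro k hk
      have hk' : k ≤ m := by have := Finset.mem_range.mp hk; omega
      have hsub : m + 1 - k = (m - k) + 1 := by omega
      have hpw : q ^ k * q ^ (m - k) = q ^ m := by
        rw [← pow_add, Nat.add_sub_cancel' hk']
      rw [hsub]
      linear_combination ((-1 : ℂ) ^ k * q ^ k * u k) * hu (m - k) (by omega)
        - (b * (-1 : ℂ) ^ k * u k * u (m - k)) * hpw
    have t2 : ∑ k ∈ Finset.range (m + 1),
          (-1 : ℂ) ^ k * q ^ k * u k * ((1 + b * q ^ (m + 1 - k)) * u (m + 1 - k))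
        = ∑ k ∈ Finset.range (m + 1),
          ((-1 : ℂ) ^ k * q ^ k * u k * u (m + 1 - k)
            + b * q ^ (m + 1) * ((-1 : ℂ) ^ k * u k * u (m + 1 - k))) := by
      apply Finset.sum_congr rfl
      intro k hk
      have hk' : k ≤ m := by have := Finset.mem_range.mp hk; omega
      have hpw : q ^ k * q ^ (m + 1 - k) = q ^ (m + 1) := by
        rw [← pow_add, Nat.add_sub_cancel' (by omega)]
      linear_combination (b * (-1 : ℂ) ^ k * u k * u (m + 1 - k)) * hpw
    have s1 : ∑ k ∈ Finset.range (m + 1), (-1 : ℂ) ^ k * q ^ k * u k * u (m + 1 - k)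
        = D' - q ^ (m + 1) * u (m + 1) := by
      rw [hD', Finset.sum_range_succ
        (fun k => (-1 : ℂ) ^ k * q ^ k * u k * u (m + 1 - k)) (m + 1)]
      simp only [Nat.sub_self, hu0, hm1]
      ring
    have s2 : ∑ k ∈ Finset.range (m + 1), (-1 : ℂ) ^ k * u k * u (m + 1 - k)
        = A' - u (m + 1) := by
      rw [hA', Finset.sum_range_succ (fun k => (-1 : ℂ) ^ k * u k * u (m + 1 - k)) (m + 1)]
      simp only [Nat.sub_self, hu0, hm1]
      ring
    have e6 : ∑ k ∈ Finset.range (m + 1),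
          ((-1 : ℂ) ^ k * q ^ k * u k * u (m + 1 - k)
            + b * q ^ (m + 1) * ((-1 : ℂ) ^ k * u k * u (m + 1 - k)))
        = (D' - q ^ (m + 1) * u (m + 1)) + b * q ^ (m + 1) * (A' - u (m + 1)) := by
      rw [Finset.sum_add_distrib, ← Finset.mul_sum, s1, s2]
    have e7 : ∑ k ∈ Finset.range (m + 1),
          ((-1 : ℂ) ^ k * q ^ k * u k * u (m - k)
            - b * q ^ m * ((-1 : ℂ) ^ k * u k * u (m - k)))
        = D := by
      rw [Finset.sum_sub_distrib, ← Finset.mul_sum, ← hD, hA]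
      ring
    calc D' - q ^ (m + 1) * u (m + 1) + b * q ^ (m + 1) * (A' - u (m + 1))
        = ∑ k ∈ Finset.range (m + 1),
            ((-1 : ℂ) ^ k * q ^ k * u k * u (m + 1 - k)
              + b * q ^ (m + 1) * ((-1 : ℂ) ^ k * u k * u (m + 1 - k))) := e6.symm
      _ = ∑ k ∈ Finset.range (m + 1),
            ((-1 : ℂ) ^ k * q ^ k * u k * ((1 + b * q ^ (m + 1 - k)) * u (m + 1 - k))) := t2.symm
      _ = D := t1.trans e7
  linear_combination hII - b * hIII

/-- The `c = q` case of Bailey's ₄φ₃ summation (Lemma 2.2). -/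
theorem bailey_lemma_c_eq_q (n : ℕ) (q b : ℂ)
    (hden : ∀ k ≤ n, qPoch q (-b) (n - k + 1) ≠ 0 ∧ qPoch q (-(b * q)) k ≠ 0)
    (heven : n % 2 = 0 → qPoch q (-(b * q)) n * (1 - b ^ 2 * q ^ n) ≠ 0) :
    ∑ k ∈ Finset.range (n + 1),
      (-1 : ℂ) ^ k * (qPoch q b k * qPoch q b (n - k)) /
        (qPoch q (-b) (n - k + 1) * qPoch q (-(b * q)) k)
    = if n % 2 = 0 then
        qPoch q b (n + 1) / (qPoch q (-(b * q)) n * (1 - b ^ 2 * q ^ n))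
      else 0 := by
  have hQ : ∀ k ≤ n, qPoch q (-(b * q)) k ≠ 0 := fun k hk => (hden k hk).2
  have h1b : (1 : ℂ) + b ≠ 0 := by
    have h := (hden n le_rfl).1
    rw [Nat.sub_self, qPoch_neg_succ] at h
    exact fun h0 => h (by rw [h0, zero_mul])
  set u : ℕ → ℂ := fun k => qPoch q b k / qPoch q (-(b * q)) k with hudef
  have hu0 : u 0 = 1 := by simp [hudef, qPoch_zero]
  have hu : ∀ k, k + 1 ≤ n → (1 + b * q ^ (k + 1)) * u (k + 1) = (1 - b * q ^ k) * u k := by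
    intro k hk
    have hq1 : qPoch q (-(b * q)) (k + 1)
        = qPoch q (-(b * q)) k * (1 + b * q ^ (k + 1)) := by
      rw [qPoch_succ]; ring
    have hQk : qPoch q (-(b * q)) k ≠ 0 := hQ k (by omega)
    have hx : (1 : ℂ) + b * q ^ (k + 1) ≠ 0 := by
      have := hQ (k + 1) hk
      rw [hq1] at this
      exact right_ne_zero_of_mul this
    simp only [hudef]
    rw [hq1, qPoch_succ]
    field_simp
  -- rewrite the sum
  have hsum : ∑ k ∈ Finset.range (n + 1),
        (-1 : ℂ) ^ k * (qPoch q b k * qPoch q b (n - k)) /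
          (qPoch q (-b) (n - k + 1) * qPoch q (-(b * q)) k)
      = (1 + b)⁻¹ * ∑ k ∈ Finset.range (n + 1), (-1 : ℂ) ^ k * u k * u (n - k) := by
    rw [Finset.mul_sum]
    apply Finset.sum_congr rfl
    intro k _
    rw [qPoch_neg_succ]
    simp only [hudef]
    rw [div_eq_mul_inv, mul_inv, mul_inv]
    ring
  rw [hsum]
  rcases Nat.even_or_odd n with hpar | hpar
  · -- even case
    have hn2 : n % 2 = 0 := Nat.even_iff.mp hpar
    rw [if_pos hn2]
    have hkey : (∑ k ∈ Finset.range (n + 1), (-1 : ℂ) ^ k * u k * u (n - k))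
          * (1 - b ^ 2 * q ^ n)
        = (1 + b) * u n * (1 - b * q ^ n) := by
      rcases n with _ | m
      · simp [hu0]
        ring
      · have hm : m % 2 = 1 := by omega
        exact key_even q b u m hm hu0 (fun k hk => hu k (by omega))
    have hd := heven hn2
    have hQn : qPoch q (-(b * q)) n ≠ 0 := hQ n le_rfl
    have hb2 : (1 : ℂ) - b ^ 2 * q ^ n ≠ 0 := right_ne_zero_of_mul hd
    have hun : u n * qPoch q (-(b * q)) n = qPoch q b n := by
      simp only [hudef]
      exact div_mul_cancel₀ _ hQn
    rw [inv_mul_eq_div, div_eq_div_iff h1b hd, qPoch_succ]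
    linear_combination qPoch q (-(b * q)) n * hkey
      + ((1 + b) * (1 - b * q ^ n)) * hun
  · -- odd case
    have hn2 : ¬ n % 2 = 0 := by
      have := Nat.odd_iff.mp hpar; omega
    rw [if_neg hn2, sum_odd_zero u n (Nat.odd_iff.mp hpar), mul_zero]
end

section
/- Chen's bibasic summation formula: Let $n \ge 0$ be an integer and let $p, q, a, b, d$ be nonzero complex numbers such that all factors occurring in denominators below are nonzero. Then $\sum_{k=0}^{n} \frac{(1-b)(1-db)\,(abq^{k};p)_n\,(a/(dbq^{k});p)_n\,(-1)^k q^{\binom{k+1}{2}}}{(1-bq^{k})(1-dbq^{k})\,(q;q)_k\,(db^2q^{k};q)_k\,(q;q)_{n-k}\,(db^2q^{2k+1};q)_{n-k}} = \frac{(a;p)_n\,(a/d;p)_n}{(bq;q)_n\,(dbq;q)_n}$, where $\binom{k+1}{2} = k(k+1)/2$. -/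
set_option autoImplicit false

set_option maxHeartbeats 1000000

private lemma qPoch_factor {q c : ℂ} {m : ℕ} (h : qPoch q c m ≠ 0) {j : ℕ} (hj : j < m) :
    1 - c * q ^ j ≠ 0 :=
  fun h0 => h (Finset.prod_eq_zero (Finset.mem_range.mpr hj) h0)

private lemma gauss_aux (k m : ℕ) :
    k * (k + m) = k * (k + 1) / 2 + ((∑ i ∈ Finset.range k, i) + k * m) := by
  rcases k with _ | j
  · simp
  · have hS : (∑ i ∈ Finset.range (j + 1), i) * 2 = (j + 1) * j := by
      simpa using Finset.sum_range_id_mul_two (j + 1)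
    have hT : (j + 1) * ((j + 1) + 1) / 2 * 2 = (j + 1) * ((j + 1) + 1) :=
      Nat.div_mul_cancel ((Nat.even_mul_succ_self (j + 1)).two_dvd)
    apply Nat.eq_of_mul_eq_mul_right (show 0 < 2 by norm_num)
    calc (j+1) * ((j+1) + m) * 2
        = (j+1)*((j+1)+1) + ((j+1) * j + (j+1)*m*2) := by ring
      _ = ((j+1)*((j+1)+1)/2)*2 + ((∑ i ∈ Finset.range (j+1), i)*2 + (j+1)*m*2) := by
          rw [hT, hS]
      _ = ((j+1)*((j+1)+1)/2 + ((∑ i ∈ Finset.range (j+1), i) + (j+1)*m))*2 := by ring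

/-- Chen's bibasic summation formula. -/
theorem chen_bibasic_summation (n : ℕ) (p q a b d : ℂ) (hp : p ≠ 0) (hq : q ≠ 0) (ha : a ≠ 0)
    (hb : b ≠ 0) (hd : d ≠ 0)
    (hden : ∀ k ≤ n,
      (1 - b * q ^ k) * (1 - d * b * q ^ k) * qPoch q q k * qPoch q (d * b ^ 2 * q ^ k) k *
        qPoch q q (n - k) * qPoch q (d * b ^ 2 * q ^ (2 * k + 1)) (n - k) ≠ 0)
    (hden2 : qPoch q (b * q) n * qPoch q (d * b * q) n ≠ 0) :
    ∑ k ∈ Finset.range (n + 1),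
      (1 - b) * (1 - d * b) * qPoch p (a * b * q ^ k) n * qPoch p (a / (d * b * q ^ k)) n *
        (-1 : ℂ) ^ k * q ^ (k * (k + 1) / 2) /
      ((1 - b * q ^ k) * (1 - d * b * q ^ k) * qPoch q q k * qPoch q (d * b ^ 2 * q ^ k) k *
        qPoch q q (n - k) * qPoch q (d * b ^ 2 * q ^ (2 * k + 1)) (n - k))
    = qPoch p a n * qPoch p (a / d) n / (qPoch q (b * q) n * qPoch q (d * b * q) n) := by
  have hqp : ∀ i : ℕ, q ^ i ≠ 0 := fun i => pow_ne_zero i hq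
  have hdb2 : d * b ^ 2 ≠ 0 := by
    simp [hd, hb]
  have hdb2q : ∀ i : ℕ, d * b ^ 2 * q ^ i ≠ 0 := fun i => mul_ne_zero hdb2 (hqp i)
  -- extract nonzeroness of each denominator factor
  have hfact : ∀ k, k ≤ n → (1 - b * q ^ k ≠ 0) ∧ (1 - d * b * q ^ k ≠ 0) ∧
      qPoch q q k ≠ 0 ∧ qPoch q (d * b ^ 2 * q ^ k) k ≠ 0 ∧
      qPoch q q (n - k) ≠ 0 ∧ qPoch q (d * b ^ 2 * q ^ (2 * k + 1)) (n - k) ≠ 0 := by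
    intro k hk
    have h := hden k hk
    simp only [mul_ne_zero_iff] at h
    exact ⟨h.1.1.1.1.1, h.1.1.1.1.2, h.1.1.1.2, h.1.1.2, h.1.2, h.2⟩
  -- 1 - q^j ≠ 0 for 1 ≤ j ≤ n
  have h1q : ∀ j, 0 < j → j ≤ n → (1 : ℂ) - q ^ j ≠ 0 := by
    intro j hj hjn
    have h := (hfact 0 (Nat.zero_le n)).2.2.2.2.1
    simp only [Nat.sub_zero] at h
    have := qPoch_factor h (show j - 1 < n by omega)
    have hrw : q * q ^ (j - 1) = q ^ j := by
      rw [← pow_succ']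
      congr 1
      omega
    rwa [hrw] at this
  -- q^i ≠ q^k for i ≠ k, both ≤ n
  have hqdiff : ∀ i k, i ≤ n → k ≤ n → i ≠ k → q ^ k - q ^ i ≠ 0 := by
    intro i k hi hk hik h0
    have h0' : q ^ k = q ^ i := by linear_combination h0
    rcases lt_or_gt_of_ne hik with hlt | hlt
    · -- i < k : q^k = q^i * q^(k-i)
      have : q ^ i * q ^ (k - i) = q ^ i * 1 := by
        rw [← pow_add, mul_one]
        rw [show i + (k - i) = k by omega]
        exact h0'
      have h1 : q ^ (k - i) = 1 := mul_left_cancel₀ (hqp i) this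
      exact h1q (k - i) (by omega) (by omega) (by rw [h1]; ring)
    · have : q ^ k * q ^ (i - k) = q ^ k * 1 := by
        rw [← pow_add, mul_one]
        rw [show k + (i - k) = i by omega]
        exact h0'.symm
      have h1 : q ^ (i - k) = 1 := mul_left_cancel₀ (hqp k) this
      exact h1q (i - k) (by omega) (by omega) (by rw [h1]; ring)
  -- 1 - d b^2 q^(k+i) ≠ 0 for i ≠ k both ≤ n
  have hAne : ∀ i k, i ≤ n → k ≤ n → i ≠ k → (1 : ℂ) - d * b ^ 2 * q ^ (k + i) ≠ 0 := by
    intro i k hi hk hik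
    set m := k + i with hm
    have hm1 : 1 ≤ m := by omega
    by_cases hmn : m ≤ n
    · have h := (hfact m hmn).2.2.2.1
      have := qPoch_factor h (show 0 < m by omega)
      simpa using this
    · have h := (hfact n le_rfl).2.2.2.1
      have := qPoch_factor h (show m - n < n by omega)
      rw [show d * b ^ 2 * q ^ n * q ^ (m - n) = d * b ^ 2 * q ^ m by
        rw [mul_assoc, ← pow_add]; congr 2; omega] at this
      exact this
  set S : Finset ℕ := Finset.range (n + 1) with hS
  set σ : ℕ → ℂ := fun i => q ^ i + 1 / (d * b ^ 2 * q ^ i) with hσ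
  set y : ℂ := 1 / b + 1 / (d * b) with hy
  have hσsub : ∀ i k : ℕ, σ k - σ i =
      -((q ^ k - q ^ i) * (1 - d * b ^ 2 * q ^ (k + i))) / (d * b ^ 2 * q ^ (k + i)) := by
    intro i k
    simp only [hσ]
    rw [pow_add]
    field_simp
    ring
  have hystar : ∀ i : ℕ, y - σ i =
      -((1 - b * q ^ i) * (1 - d * b * q ^ i)) / (d * b ^ 2 * q ^ i) := by
    intro i
    simp only [hσ, hy]
    field_simp
    ring
  have hσne : ∀ i k, i ≤ n → k ≤ n → i ≠ k → σ k - σ i ≠ 0 := by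
    intro i k hi hk hik
    rw [hσsub]
    apply div_ne_zero _ (hdb2q _)
    exact neg_ne_zero.mpr (mul_ne_zero (hqdiff i k hi hk hik) (hAne i k hi hk hik))
  have hinj : Set.InjOn σ (S : Set ℕ) := by
    intro i hi k hk hik
    simp only [hS, Finset.coe_range, Set.mem_Iio] at hi hk
    by_contra hne
    exact hσne i k (by omega) (by omega) (fun h => hne h) (by rw [hik]; ring)
  set F : Polynomial ℂ := ∏ j ∈ Finset.range n,
      (Polynomial.C (1 + (a * b * p ^ j) ^ 2 / (d * b ^ 2)) -
        Polynomial.C (a * b * p ^ j) * Polynomial.X) with hF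
  have hdegF : F.degree < (S.card : WithBot ℕ) := by
    have h1 : F.degree ≤ (n : WithBot ℕ) := by
      rw [hF]
      refine le_trans (Polynomial.degree_prod_le _ _) ?_
      refine le_trans (Finset.sum_le_sum (fun j (_ : j ∈ Finset.range n) =>
        (le_trans (Polynomial.degree_sub_le _ _)
          (max_le (le_trans Polynomial.degree_C_le (by norm_num))
            (Polynomial.degree_C_mul_X_le _)) : Polynomial.degree _ ≤ (1 : WithBot ℕ)))) ?_
      simp
    refine lt_of_le_of_lt h1 ?_
    rw [hS, Finset.card_range]
    exact_mod_cast Nat.lt_succ_self n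
  have hFeval : ∀ x : ℂ, F.eval x = ∏ j ∈ Finset.range n,
      (1 + (a * b * p ^ j) ^ 2 / (d * b ^ 2) - (a * b * p ^ j) * x) := by
    intro x
    rw [hF, Polynomial.eval_prod]
    exact Finset.prod_congr rfl fun j _ => by simp
  have hFnode : ∀ k : ℕ, F.eval (σ k) =
      qPoch p (a * b * q ^ k) n * qPoch p (a / (d * b * q ^ k)) n := by
    intro k
    rw [hFeval, qPoch, qPoch, ← Finset.prod_mul_distrib]
    refine Finset.prod_congr rfl fun j _ => ?_
    simp only [hσ]
    have h1 : d * b * q ^ k ≠ 0 := by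
      simp [hd, hb, hqp k]
    field_simp
    ring
  have hFstar : F.eval y = qPoch p a n * qPoch p (a / d) n := by
    rw [hFeval, qPoch, qPoch, ← Finset.prod_mul_distrib]
    refine Finset.prod_congr rfl fun j _ => ?_
    simp only [hy]
    field_simp
    ring
  have hkey : F.eval y = ∑ k ∈ S, F.eval (σ k) * Polynomial.eval y (Lagrange.basis S σ k) := by
    conv_lhs => rw [Lagrange.eq_interpolate hinj hdegF]
    rw [Lagrange.interpolate_apply, Polynomial.eval_finset_sum]
    exact Finset.sum_congr rfl fun k _ => by rw [Polynomial.eval_mul, Polynomial.eval_C]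
  have hbasis : ∀ k, Polynomial.eval y (Lagrange.basis S σ k) =
      ∏ i ∈ S.erase k, ((σ k - σ i)⁻¹ * (y - σ i)) := by
    intro k
    rw [Lagrange.basis, Polynomial.eval_prod]
    exact Finset.prod_congr rfl fun i _ => by simp [Lagrange.basisDivisor]
  have hLag : ∀ k, k ≤ n → Polynomial.eval y (Lagrange.basis S σ k) =
      (1 - b) * (1 - d * b) * (-1 : ℂ) ^ k * q ^ (k * (k + 1) / 2) *
        (qPoch q (b * q) n * qPoch q (d * b * q) n) /
      ((1 - b * q ^ k) * (1 - d * b * q ^ k) * qPoch q q k * qPoch q (d * b ^ 2 * q ^ k) k *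
        qPoch q q (n - k) * qPoch q (d * b ^ 2 * q ^ (2 * k + 1)) (n - k)) := by
    intro k hk
    obtain ⟨hb1, hb2, hp1, hp2, hp3, hp4⟩ := hfact k hk
    have hkS : k ∈ S := by
      simp only [hS, Finset.mem_range]
      omega
    rw [hbasis k]
    have hterm : ∀ i ∈ S.erase k, (σ k - σ i)⁻¹ * (y - σ i) =
        (1 - b * q ^ i) * (1 - d * b * q ^ i) * q ^ k *
          ((q ^ k - q ^ i) * (1 - d * b ^ 2 * q ^ (k + i)))⁻¹ := by
      intro i hi
      obtain ⟨hik, hiS⟩ := Finset.mem_erase.mp hi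
      have hin : i ≤ n := by
        simp only [hS, Finset.mem_range] at hiS
        omega
      have h1 : q ^ k - q ^ i ≠ 0 := hqdiff i k hin hk hik
      have h2 : (1 : ℂ) - d * b ^ 2 * q ^ (k + i) ≠ 0 := hAne i k hin hk hik
      have h3 : d * b ^ 2 * q ^ (k + i) ≠ 0 := hdb2q _
      have h4 : d * b ^ 2 * q ^ i ≠ 0 := hdb2q _
      rw [hσsub, hystar]
      rw [pow_add] at h2 h3 ⊢
      field_simp
    rw [Finset.prod_congr rfl hterm]
    have hcard : (S.erase k).card = n := by
      rw [Finset.card_erase_of_mem hkS, hS, Finset.card_range]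
      omega
    have hEsplit : S.erase k = Finset.range k ∪ Finset.Ico (k + 1) (n + 1) := by
      ext x
      simp only [hS, Finset.mem_erase, Finset.mem_range, Finset.mem_union, Finset.mem_Ico]
      omega
    have hdisj : Disjoint (Finset.range k) (Finset.Ico (k + 1) (n + 1)) := by
      rw [Finset.disjoint_left]
      intro x hx hx2
      simp only [Finset.mem_range] at hx
      simp only [Finset.mem_Ico] at hx2
      omega
    have hBne : ∀ i ∈ S.erase k, (q ^ k - q ^ i) * (1 - d * b ^ 2 * q ^ (k + i)) ≠ 0 := by
      intro i hi
      obtain ⟨hik, hiS⟩ := Finset.mem_erase.mp hi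
      have hin : i ≤ n := by
        simp only [hS, Finset.mem_range] at hiS
        omega
      exact mul_ne_zero (hqdiff i k hin hk hik) (hAne i k hin hk hik)
    have hBprodne : (∏ i ∈ S.erase k, ((q ^ k - q ^ i) * (1 - d * b ^ 2 * q ^ (k + i)))) ≠ 0 :=
      Finset.prod_ne_zero_iff.mpr hBne
    -- full pochhammer product over S
    have hPfull : ∏ i ∈ S, ((1 - b * q ^ i) * (1 - d * b * q ^ i)) =
        ((1 - b * q ^ k) * (1 - d * b * q ^ k)) *
          ∏ i ∈ S.erase k, ((1 - b * q ^ i) * (1 - d * b * q ^ i)) :=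
      (Finset.mul_prod_erase S _ hkS).symm
    have hPfull2 : ∏ i ∈ S, ((1 - b * q ^ i) * (1 - d * b * q ^ i)) =
        (1 - b) * (1 - d * b) * (qPoch q (b * q) n * qPoch q (d * b * q) n) := by
      rw [hS, Finset.prod_range_succ']
      simp only [pow_zero, mul_one]
      rw [qPoch, qPoch, ← Finset.prod_mul_distrib]
      have h5 : ∀ i ∈ Finset.range n, (1 - b * q ^ (i + 1)) * (1 - d * b * q ^ (i + 1)) =
          (1 - b * q * q ^ i) * (1 - d * b * q * q ^ i) := by
        intro i _
        rw [pow_succ']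
        ring
      rw [Finset.prod_congr rfl h5]
      ring
    -- products of node differences
    have hP3a : (-1 : ℂ) ^ k * ∏ i ∈ Finset.range k, (q ^ k - q ^ i) =
        q ^ (∑ i ∈ Finset.range k, i) * qPoch q q k := by
      have h0 : ((-1 : ℂ)) ^ k = ∏ _i ∈ Finset.range k, (-1 : ℂ) := by simp
      rw [h0, ← Finset.prod_mul_distrib]
      have h1 : ∀ i ∈ Finset.range k, (-1 : ℂ) * (q ^ k - q ^ i) =
          q ^ i * (1 - q ^ (k - i)) := by
        intro i hi
        have hik : i < k := Finset.mem_range.mp hi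
        rw [show (q : ℂ) ^ k = q ^ i * q ^ (k - i) by rw [← pow_add]; congr 1; omega]
        ring
      rw [Finset.prod_congr rfl h1, Finset.prod_mul_distrib, Finset.prod_pow_eq_pow_sum]
      congr 1
      rw [qPoch]
      conv_lhs => rw [← Finset.prod_range_reflect]
      refine Finset.prod_congr rfl fun i hi => ?_
      have hik : i < k := Finset.mem_range.mp hi
      rw [show k - (k - 1 - i) = i + 1 by omega, pow_succ']
    have hP3b : ∏ i ∈ Finset.Ico (k + 1) (n + 1), (q ^ k - q ^ i) =
        q ^ (k * (n - k)) * qPoch q q (n - k) := by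
      rw [Finset.prod_Ico_eq_prod_range, show n + 1 - (k + 1) = n - k by omega]
      have h1 : ∀ j ∈ Finset.range (n - k), q ^ k - q ^ (k + 1 + j) =
          q ^ k * (1 - q * q ^ j) := by
        intro j _
        rw [show k + 1 + j = k + (1 + j) by omega, pow_add, pow_add, pow_one]
        ring
      rw [Finset.prod_congr rfl h1, Finset.prod_mul_distrib, Finset.prod_const,
        Finset.card_range, qPoch, ← pow_mul]
    have hP4a : ∏ i ∈ Finset.range k, (1 - d * b ^ 2 * q ^ (k + i)) =
        qPoch q (d * b ^ 2 * q ^ k) k := by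
      rw [qPoch]
      refine Finset.prod_congr rfl fun i _ => ?_
      rw [pow_add]
      ring
    have hP4b : ∏ i ∈ Finset.Ico (k + 1) (n + 1), (1 - d * b ^ 2 * q ^ (k + i)) =
        qPoch q (d * b ^ 2 * q ^ (2 * k + 1)) (n - k) := by
      rw [Finset.prod_Ico_eq_prod_range, show n + 1 - (k + 1) = n - k by omega, qPoch]
      refine Finset.prod_congr rfl fun j _ => ?_
      rw [show k + (k + 1 + j) = (2 * k + 1) + j by omega, pow_add]
      ring
    have hEprod1 : (-1 : ℂ) ^ k * ∏ i ∈ S.erase k, (q ^ k - q ^ i) =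
        q ^ (∑ i ∈ Finset.range k, i) * qPoch q q k *
          (q ^ (k * (n - k)) * qPoch q q (n - k)) := by
      rw [hEsplit, Finset.prod_union hdisj, ← mul_assoc, hP3a, hP3b]
    have hEprod2 : ∏ i ∈ S.erase k, (1 - d * b ^ 2 * q ^ (k + i)) =
        qPoch q (d * b ^ 2 * q ^ k) k * qPoch q (d * b ^ 2 * q ^ (2 * k + 1)) (n - k) := by
      rw [hEsplit, Finset.prod_union hdisj, hP4a, hP4b]
    -- collapse combined product against B-product
    have hcollapse : (∏ i ∈ S.erase k, ((1 - b * q ^ i) * (1 - d * b * q ^ i) * q ^ k *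
          ((q ^ k - q ^ i) * (1 - d * b ^ 2 * q ^ (k + i)))⁻¹)) *
        (∏ i ∈ S.erase k, ((q ^ k - q ^ i) * (1 - d * b ^ 2 * q ^ (k + i)))) =
        (∏ i ∈ S.erase k, ((1 - b * q ^ i) * (1 - d * b * q ^ i))) * (q ^ k) ^ n := by
      rw [← Finset.prod_mul_distrib]
      rw [show ((q : ℂ) ^ k) ^ n = ∏ _i ∈ S.erase k, (q : ℂ) ^ k by
        rw [Finset.prod_const, hcard]]
      rw [← Finset.prod_mul_distrib]
      refine Finset.prod_congr rfl fun i hi => ?_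
      rw [mul_assoc, inv_mul_cancel₀ (hBne i hi), mul_one]
    -- the exponent identity
    have hqkn : ((q : ℂ) ^ k) ^ n = q ^ (k * (k + 1) / 2) *
        (q ^ (∑ i ∈ Finset.range k, i) * q ^ (k * (n - k))) := by
      rw [← pow_mul, ← pow_add, ← pow_add]
      congr 1
      have hexp := gauss_aux k (n - k)
      rw [show k + (n - k) = n by omega] at hexp
      omega
    -- put it together
    rw [eq_div_iff (hden k hk)]
    apply mul_right_cancel₀ (mul_ne_zero hBprodne (mul_ne_zero hb1 hb2))
    calc (∏ i ∈ S.erase k, ((1 - b * q ^ i) * (1 - d * b * q ^ i) * q ^ k *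
            ((q ^ k - q ^ i) * (1 - d * b ^ 2 * q ^ (k + i)))⁻¹)) *
          ((1 - b * q ^ k) * (1 - d * b * q ^ k) * qPoch q q k * qPoch q (d * b ^ 2 * q ^ k) k *
            qPoch q q (n - k) * qPoch q (d * b ^ 2 * q ^ (2 * k + 1)) (n - k)) *
          ((∏ i ∈ S.erase k, ((q ^ k - q ^ i) * (1 - d * b ^ 2 * q ^ (k + i)))) *
            ((1 - b * q ^ k) * (1 - d * b * q ^ k)))
        = ((∏ i ∈ S.erase k, ((1 - b * q ^ i) * (1 - d * b * q ^ i) * q ^ k *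
            ((q ^ k - q ^ i) * (1 - d * b ^ 2 * q ^ (k + i)))⁻¹)) *
          (∏ i ∈ S.erase k, ((q ^ k - q ^ i) * (1 - d * b ^ 2 * q ^ (k + i))))) *
          (((1 - b * q ^ k) * (1 - d * b * q ^ k)) *
          ((1 - b * q ^ k) * (1 - d * b * q ^ k) * qPoch q q k * qPoch q (d * b ^ 2 * q ^ k) k *
            qPoch q q (n - k) * qPoch q (d * b ^ 2 * q ^ (2 * k + 1)) (n - k))) := by
          ring
      _ = ((∏ i ∈ S.erase k, ((1 - b * q ^ i) * (1 - d * b * q ^ i))) * (q ^ k) ^ n) *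
          (((1 - b * q ^ k) * (1 - d * b * q ^ k)) *
          ((1 - b * q ^ k) * (1 - d * b * q ^ k) * qPoch q q k * qPoch q (d * b ^ 2 * q ^ k) k *
            qPoch q q (n - k) * qPoch q (d * b ^ 2 * q ^ (2 * k + 1)) (n - k))) := by
          rw [hcollapse]
      _ = ((((1 - b * q ^ k) * (1 - d * b * q ^ k)) *
            ∏ i ∈ S.erase k, ((1 - b * q ^ i) * (1 - d * b * q ^ i))) * (q ^ k) ^ n) *
          ((1 - b * q ^ k) * (1 - d * b * q ^ k) * qPoch q q k * qPoch q (d * b ^ 2 * q ^ k) k *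
            qPoch q q (n - k) * qPoch q (d * b ^ 2 * q ^ (2 * k + 1)) (n - k)) := by
          ring
      _ = (((1 - b) * (1 - d * b) * (qPoch q (b * q) n * qPoch q (d * b * q) n)) * (q ^ k) ^ n) *
          ((1 - b * q ^ k) * (1 - d * b * q ^ k) * qPoch q q k * qPoch q (d * b ^ 2 * q ^ k) k *
            qPoch q q (n - k) * qPoch q (d * b ^ 2 * q ^ (2 * k + 1)) (n - k)) := by
          rw [← hPfull, hPfull2]
      _ = ((1 - b) * (1 - d * b) * (qPoch q (b * q) n * qPoch q (d * b * q) n)) *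
          (q ^ (k * (k + 1) / 2) * (q ^ (∑ i ∈ Finset.range k, i) * q ^ (k * (n - k)))) *
          ((1 - b * q ^ k) * (1 - d * b * q ^ k) * qPoch q q k * qPoch q (d * b ^ 2 * q ^ k) k *
            qPoch q q (n - k) * qPoch q (d * b ^ 2 * q ^ (2 * k + 1)) (n - k)) := by
          rw [hqkn]
      _ = ((1 - b) * (1 - d * b) * q ^ (k * (k + 1) / 2) *
            (qPoch q (b * q) n * qPoch q (d * b * q) n)) *
          (((-1 : ℂ) ^ k * ∏ i ∈ S.erase k, (q ^ k - q ^ i)) *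
            (∏ i ∈ S.erase k, (1 - d * b ^ 2 * q ^ (k + i))) *
            ((1 - b * q ^ k) * (1 - d * b * q ^ k))) := by
          rw [hEprod1, hEprod2]
          ring
      _ = ((1 - b) * (1 - d * b) * (-1 : ℂ) ^ k * q ^ (k * (k + 1) / 2) *
            (qPoch q (b * q) n * qPoch q (d * b * q) n)) *
          ((∏ i ∈ S.erase k, ((q ^ k - q ^ i) * (1 - d * b ^ 2 * q ^ (k + i)))) *
            ((1 - b * q ^ k) * (1 - d * b * q ^ k))) := by
          rw [Finset.prod_mul_distrib]
          ring
  have hDN : qPoch q (b * q) n * qPoch q (d * b * q) n ≠ 0 := hden2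
  rw [← hFstar, hkey, Finset.sum_div]
  refine Finset.sum_congr rfl fun k hkS => ?_
  have hk : k ≤ n := by
    simp only [hS, Finset.mem_range] at hkS
    omega
  rw [hFnode k, hLag k hk]
  rw [← mul_div_assoc, div_div]
  rw [div_eq_div_iff (hden k hk) (mul_ne_zero (hden k hk) hDN)]
  ring
end

section
/- Chu's bibasic summation formula: Let $m, n \ge 0$ be integers, let $\alpha, c, d$ be nonzero complex numbers, and let $(a_j)_{j \in \mathbb{Z}}$ and $(b_j)_{j \in \mathbb{Z}}$ be sequences of complex numbers, such that all factors occurring in denominators below are nonzero. For integers $k$, interpret $\prod_{j=0}^{k-1} x_j$ as the usual product when $k \ge 0$ and as $\prod_{j=k}^{-1} x_j^{-1}$ when $k < 0$, and interpret $\prod_{j=1}^{k} y_j$ as the usual product when $k \ge 0$ and as $\prod_{j=k+1}^{0} y_j^{-1}$ when $k < 0$. Then $\sum_{k=-m}^{n} \frac{(1-\alpha a_k b_k)(b_k - a_k/(\alpha d))}{(1-\alpha a_0 b_0)(b_0 - a_0/(\alpha d))} \cdot \frac{\prod_{j=0}^{k-1} (1-a_j)(1-a_j/d)(1-cb_j)(1-\alpha^2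 d b_j/c)}{\prod_{j=1}^{k} (1-\alpha b_j)(1-\alpha a_j/c)(1-\alpha d b_j)(1-c a_j/(\alpha d))} = \frac{(1-a_0)(1-a_0/d)(1-cb_0)(1-\alpha^2 d b_0/c)}{\alpha (1-\alpha a_0 b_0)(1-c/\alpha)(b_0 - a_0/(\alpha d))(1-\alpha d/c)} \cdot \Big( \prod_{j=1}^{n} \frac{(1-a_j)(1-a_j/d)(1-cb_j)(1-\alpha^2 d b_j/c)}{(1-\alpha b_j)(1-\alpha a_j/c)(1-\alpha d b_j)(1-c a_j/(\alpha d))} - \prod_{j=-m}^{0} \frac{(1-\alpha b_j)(1-\alpha a_j/c)(1-\alpha d b_j)(1-c a_j/(\alpha d))}{(1-a_j)(1-a_j/d)(1-cb_j)(1-\alpha^2 d b_j/c)} \Big)$. -/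
/-!
Let `P j = (1 - a j)(1 - a j/d)(1 - c b j)(1 - α² d b j/c)` and
`Q j = (1 - α b j)(1 - α a j/c)(1 - α d b j)(1 - c a j/(α d))`. Expanding gives
`P k - Q k = α (1 - c/α)(1 - α d/c)(1 - α a k b k)(b k - a k/(α d))`, so the `k`-th summand is a
fixed multiple of `u k - u (k - 1)`, where `u k = ∏_{j=1}^{k} P j / Q j` (with the convention for
negative `k`). The sum telescopes to `u n - u (-m - 1)`, giving the two products on the right.
-/

set_option autoImplicit false

/-- Generalized product `∏_{j=0}^{k-1} f j` for an integer upper parameter `k`: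
for `k ≥ 0` it is the usual product, and for `k < 0` it is `∏_{j=k}^{-1} (f j)⁻¹`. -/
noncomputable def zProd (f : ℤ → ℂ) (k : ℤ) : ℂ :=
  if 0 ≤ k then ∏ j ∈ Finset.range k.toNat, f j
  else (∏ j ∈ Finset.range (-k).toNat, f (k + j))⁻¹

open Finset

theorem sum_Icc_sub_sub_one {M : Type*} [AddCommGroup M] (T : ℤ → M) {lo hi : ℤ}
    (h : lo - 1 ≤ hi) :
    ∑ k ∈ Icc lo hi, (T k - T (k - 1)) = T hi - T (lo - 1) := by
  induction hi, h using Int.leInduction with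
  | base => simp
  | succ hi hle ih =>
    rw [← insert_Icc_right_eq_Icc_add_one (by omega), sum_insert (by simp), ih,
      add_sub_cancel_right]
    abel

section zProd

variable (f g : ℤ → ℂ) {k : ℤ}

theorem zProd_eq_prod_Ico (hk : 0 ≤ k) : zProd f k = ∏ j ∈ Ico 0 k, f j := by
  simp [zProd, hk, Int.Ico_eq_finset_map, prod_map]

theorem zProd_eq_inv_prod_Ico (hk : k ≤ 0) : zProd f k = (∏ j ∈ Ico k 0, f j)⁻¹ := by
  rcases hk.lt_or_eq with hk | rfl
  · simp [zProd, hk.not_ge, Int.Ico_eq_finset_map, prod_map]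
  · simp [zProd]

theorem zProd_add_one (hk : 0 ≤ k) : zProd f (k + 1) = zProd f k * f k := by
  rw [zProd_eq_prod_Ico f hk, zProd_eq_prod_Ico f (by omega),
    ← insert_Ico_right_eq_Ico_add_one hk, prod_insert (by simp), mul_comm]

theorem zProd_eq_div_of_neg (hk : k < 0) : zProd f k = zProd f (k + 1) / f k := by
  rw [zProd_eq_inv_prod_Ico f hk.le, zProd_eq_inv_prod_Ico f (by omega),
    ← insert_Ico_add_one_left_eq_Ico hk, prod_insert (by simp), mul_inv, div_eq_mul_inv,
    mul_comm]

theorem zProd_div : zProd (fun j => f j / g j) k = zProd f k / zProd g k := by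
  rcases le_total 0 k with hk | hk
  · simp only [zProd_eq_prod_Ico _ hk, prod_div_distrib]
  · simp only [zProd_eq_inv_prod_Ico _ hk, prod_div_distrib, inv_div, inv_div_inv]

theorem zProd_add_one_eq_mul_zProd_shift (hf : f 0 ≠ 0) (k : ℤ) :
    zProd f (k + 1) = f 0 * zProd (fun j => f (j + 1)) k := by
  rcases le_or_gt 0 k with hk | hk
  · rw [zProd_eq_prod_Ico _ hk, zProd_eq_prod_Ico f (k := k + 1) (by omega), prod_Ico_add',
      ← insert_Ico_add_one_left_eq_Ico (by omega), prod_insert (by simp), zero_add]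
  · rw [zProd_eq_inv_prod_Ico _ hk.le, zProd_eq_inv_prod_Ico f (k := k + 1) (by omega),
      prod_Ico_add', ← insert_Ico_right_eq_Ico_add_one (by omega), prod_insert (by simp), mul_inv,
      ← mul_assoc, mul_inv_cancel₀ hf, one_mul]

theorem zProd_shift_eq_prod_Icc (hk : 0 ≤ k) :
    zProd (fun j => f (j + 1)) k = ∏ j ∈ Icc 1 k, f j := by
  rw [zProd_eq_prod_Ico _ hk, prod_Ico_add', zero_add, Ico_add_one_right_eq_Icc]

theorem zProd_shift_sub_one_eq_inv_prod_Icc (hk : k ≤ 0) :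
    zProd (fun j => f (j + 1)) (k - 1) = (∏ j ∈ Icc k 0, f j)⁻¹ := by
  rw [zProd_eq_inv_prod_Ico _ (by omega), prod_Ico_add', sub_add_cancel,
    Ico_add_one_right_eq_Icc]

end zProd

section Telescoping

variable (P Q : ℤ → ℂ)

theorem sub_mul_zProd_div_eq_mul_sub {k : ℤ} (hP0 : P 0 ≠ 0)
    (hk : (1 ≤ k ∧ Q k ≠ 0) ∨ (k ≤ 0 ∧ P k ≠ 0)) :
    (P k - Q k) * (zProd P k / zProd (fun j => Q (j + 1)) k) =
      P 0 * (zProd (fun j => P (j + 1) / Q (j + 1)) k -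
        zProd (fun j => P (j + 1) / Q (j + 1)) (k - 1)) := by
  have hshift : zProd P k = P 0 * zProd (fun j => P (j + 1)) (k - 1) := by
    simpa using zProd_add_one_eq_mul_zProd_shift P hP0 (k - 1)
  rw [zProd_div, zProd_div, hshift]
  rcases hk with ⟨hk, hQk⟩ | ⟨hk, hPk⟩
  · have hP : zProd (fun j => P (j + 1)) k = zProd (fun j => P (j + 1)) (k - 1) * P k := by
      simpa using zProd_add_one (fun j => P (j + 1)) (k := k - 1) (by omega)
    have hQ : zProd (fun j => Q (j + 1)) k = zProd (fun j => Q (j + 1)) (k - 1) * Q k := by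
      simpa using zProd_add_one (fun j => Q (j + 1)) (k := k - 1) (by omega)
    rw [hP, hQ]
    linear_combination -(P 0 * zProd (fun j => P (j + 1)) (k - 1) *
      (zProd (fun j => Q (j + 1)) (k - 1))⁻¹) * mul_inv_cancel₀ hQk
  · have hP : zProd (fun j => P (j + 1)) (k - 1) = zProd (fun j => P (j + 1)) k / P k := by
      simpa using zProd_eq_div_of_neg (fun j => P (j + 1)) (k := k - 1) (by omega)
    have hQ : zProd (fun j => Q (j + 1)) (k - 1) = zProd (fun j => Q (j + 1)) k / Q k := by
      simpa using zProd_eq_div_of_neg (fun j => Q (j + 1)) (k := k - 1) (by omega)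
    rw [hP, hQ, div_div_div_eq]
    linear_combination (P 0 * zProd (fun j => P (j + 1)) k *
      (zProd (fun j => Q (j + 1)) k)⁻¹) * mul_inv_cancel₀ hPk

theorem sum_sub_mul_zProd_div (m n : ℕ) (hQ : ∀ j ∈ Icc (1 : ℤ) n, Q j ≠ 0)
    (hP : ∀ j ∈ Icc (-(m : ℤ)) 0, P j ≠ 0) :
    ∑ k ∈ Icc (-(m : ℤ)) n, (P k - Q k) * (zProd P k / zProd (fun j => Q (j + 1)) k) =
      P 0 * (∏ j ∈ Icc (1 : ℤ) n, P j / Q j - ∏ j ∈ Icc (-(m : ℤ)) 0, Q j / P j) := by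
  have hP0 : P 0 ≠ 0 := hP 0 (by simp)
  set u := zProd (fun j => P (j + 1) / Q (j + 1))
  calc ∑ k ∈ Icc (-(m : ℤ)) n, (P k - Q k) * (zProd P k / zProd (fun j => Q (j + 1)) k)
      = ∑ k ∈ Icc (-(m : ℤ)) n, P 0 * (u k - u (k - 1)) := by
        refine sum_congr rfl fun k hk => sub_mul_zProd_div_eq_mul_sub P Q hP0 ?_
        rw [mem_Icc] at hk
        rcases le_or_gt 1 k with h1 | h1
        · exact .inl ⟨h1, hQ k (mem_Icc.2 ⟨h1, hk.2⟩)⟩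
        · exact .inr ⟨by omega, hP k (mem_Icc.2 ⟨hk.1, by omega⟩)⟩
    _ = P 0 * (u n - u (-m - 1)) := by rw [← mul_sum, sum_Icc_sub_sub_one u (by omega)]
    _ = P 0 * (∏ j ∈ Icc (1 : ℤ) n, P j / Q j - ∏ j ∈ Icc (-(m : ℤ)) 0, Q j / P j) := by
      have hu_n : u n = ∏ j ∈ Icc (1 : ℤ) n, P j / Q j :=
        zProd_shift_eq_prod_Icc (fun j => P j / Q j) (by omega)
      have hu_m : u (-m - 1) = (∏ j ∈ Icc (-(m : ℤ)) 0, P j / Q j)⁻¹ :=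
        zProd_shift_sub_one_eq_inv_prod_Icc (fun j => P j / Q j) (by omega)
      simp only [hu_n, hu_m, ← prod_inv_distrib, inv_div]

theorem sum_div_mul_zProd_div_of_sub_eq_mul (A : ℤ → ℂ) (w A₀ : ℂ) (m n : ℕ) (hw : w ≠ 0)
    (hPQ : ∀ k, P k - Q k = w * A k) (hQ : ∀ j ∈ Icc (1 : ℤ) n, Q j ≠ 0)
    (hP : ∀ j ∈ Icc (-(m : ℤ)) 0, P j ≠ 0) :
    ∑ k ∈ Icc (-(m : ℤ)) n, A k / A₀ * (zProd P k / zProd (fun j => Q (j + 1)) k) =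
      P 0 / (w * A₀) *
        (∏ j ∈ Icc (1 : ℤ) n, P j / Q j - ∏ j ∈ Icc (-(m : ℤ)) 0, Q j / P j) := by
  have hA : ∀ k, A k = (P k - Q k) / w := fun k => by rw [hPQ, mul_div_cancel_left₀ _ hw]
  calc ∑ k ∈ Icc (-(m : ℤ)) n, A k / A₀ * (zProd P k / zProd (fun j => Q (j + 1)) k)
      = (∑ k ∈ Icc (-(m : ℤ)) n, (P k - Q k) * (zProd P k / zProd (fun j => Q (j + 1)) k)) /
          (w * A₀) := by
        rw [sum_div]
        refine sum_congr rfl fun k _ => ?_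
        rw [hA]
        ring
    _ = _ := by rw [sum_sub_mul_zProd_div P Q m n hQ hP]; ring

end Telescoping

theorem bibasic_numerator_sub_denominator {α c d : ℂ} (hα : α ≠ 0) (hc : c ≠ 0) (hd : d ≠ 0)
    (x y : ℂ) :
    (1 - x) * (1 - x / d) * (1 - c * y) * (1 - α ^ 2 * d * y / c) -
        (1 - α * y) * (1 - α * x / c) * (1 - α * d * y) * (1 - c * x / (α * d)) =
      α * (1 - c / α) * (1 - α * d / c) * ((1 - α * x * y) * (y - x / (α * d))) := by
  field_simp
  ring

/-- Here `zProd g k` encodes `∏_{j=0}^{k-1} g j`, and `zProd (fun j => g (j+1)) k` encodes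
`∏_{j=1}^{k} g j`, with the stated conventions for negative `k`. -/
theorem chu_bibasic_summation_general (m n : ℕ) (α c d : ℂ) (a b : ℤ → ℂ)
    (hα : α ≠ 0) (hc : c ≠ 0) (hd : d ≠ 0)
    (hcα : 1 - c / α ≠ 0) (hdc : 1 - α * d / c ≠ 0)
    (hpos : ∀ j ∈ Finset.Icc (1 : ℤ) (n : ℤ),
      (1 - α * b j) * (1 - α * a j / c) * (1 - α * d * b j) * (1 - c * a j / (α * d)) ≠ 0)
    (hneg : ∀ j ∈ Finset.Icc (-(m : ℤ)) (0 : ℤ),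
      (1 - a j) * (1 - a j / d) * (1 - c * b j) * (1 - α ^ 2 * d * b j / c) ≠ 0) :
    ∑ k ∈ Finset.Icc (-(m : ℤ)) (n : ℤ),
      (1 - α * a k * b k) * (b k - a k / (α * d)) /
        ((1 - α * a 0 * b 0) * (b 0 - a 0 / (α * d))) *
        (zProd (fun j => (1 - a j) * (1 - a j / d) * (1 - c * b j) *
          (1 - α ^ 2 * d * b j / c)) k /
         zProd (fun j => (1 - α * b (j + 1)) * (1 - α * a (j + 1) / c) *
          (1 - α * d * b (j + 1)) * (1 - c * a (j + 1) / (α * d))) k)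
    = (1 - a 0) * (1 - a 0 / d) * (1 - c * b 0) * (1 - α ^ 2 * d * b 0 / c) /
        (α * (1 - α * a 0 * b 0) * (1 - c / α) * (b 0 - a 0 / (α * d)) * (1 - α * d / c)) *
        ((∏ j ∈ Finset.Icc (1 : ℤ) (n : ℤ),
            (1 - a j) * (1 - a j / d) * (1 - c * b j) * (1 - α ^ 2 * d * b j / c) /
              ((1 - α * b j) * (1 - α * a j / c) * (1 - α * d * b j) *
                (1 - c * a j / (α * d))))
          - ∏ j ∈ Finset.Icc (-(m : ℤ)) (0 : ℤ),
              (1 - α * b j) * (1 - α * a j / c) * (1 - α * d * b j) *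
                (1 - c * a j / (α * d)) /
                ((1 - a j) * (1 - a j / d) * (1 - c * b j) * (1 - α ^ 2 * d * b j / c))) := by
  rw [show α * (1 - α * a 0 * b 0) * (1 - c / α) * (b 0 - a 0 / (α * d)) * (1 - α * d / c)
      = α * (1 - c / α) * (1 - α * d / c) * ((1 - α * a 0 * b 0) * (b 0 - a 0 / (α * d)))
      by ring]
  exact sum_div_mul_zProd_div_of_sub_eq_mul
    (fun j => (1 - a j) * (1 - a j / d) * (1 - c * b j) * (1 - α ^ 2 * d * b j / c))
    (fun j => (1 - α * b j) * (1 - α * a j / c) * (1 - α * d * b j) * (1 - c * a j / (α * d)))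
    (fun k => (1 - α * a k * b k) * (b k - a k / (α * d))) _ _ m n
    (mul_ne_zero (mul_ne_zero hα hcα) hdc)
    (fun k => bibasic_numerator_sub_denominator hα hc hd (a k) (b k)) hpos hneg

/-- Chu's bibasic summation formula. Here `zProd g k` encodes `∏_{j=0}^{k-1} g j`, and
`zProd (fun j => g (j+1)) k` encodes `∏_{j=1}^{k} g j`, with the stated conventions for
negative `k`. -/
theorem chu_bibasic_summation (m n : ℕ) (α c d : ℂ) (a b : ℤ → ℂ)
    (hα : α ≠ 0) (hc : c ≠ 0) (hd : d ≠ 0)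
    (h0 : 1 - α * a 0 * b 0 ≠ 0) (h0' : b 0 - a 0 / (α * d) ≠ 0)
    (hcα : 1 - c / α ≠ 0) (hdc : 1 - α * d / c ≠ 0)
    (hpos : ∀ j ∈ Finset.Icc (1 : ℤ) (n : ℤ),
      (1 - α * b j) * (1 - α * a j / c) * (1 - α * d * b j) * (1 - c * a j / (α * d)) ≠ 0)
    (hneg : ∀ j ∈ Finset.Icc (-(m : ℤ)) (0 : ℤ),
      (1 - a j) * (1 - a j / d) * (1 - c * b j) * (1 - α ^ 2 * d * b j / c) ≠ 0) :
    ∑ k ∈ Finset.Icc (-(m : ℤ)) (n : ℤ),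
      (1 - α * a k * b k) * (b k - a k / (α * d)) /
        ((1 - α * a 0 * b 0) * (b 0 - a 0 / (α * d))) *
        (zProd (fun j => (1 - a j) * (1 - a j / d) * (1 - c * b j) *
          (1 - α ^ 2 * d * b j / c)) k /
         zProd (fun j => (1 - α * b (j + 1)) * (1 - α * a (j + 1) / c) *
          (1 - α * d * b (j + 1)) * (1 - c * a (j + 1) / (α * d))) k)
    = (1 - a 0) * (1 - a 0 / d) * (1 - c * b 0) * (1 - α ^ 2 * d * b 0 / c) /
        (α * (1 - α * a 0 * b 0) * (1 - c / α) * (b 0 - a 0 / (α * d)) * (1 - α * d / c)) *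
        ((∏ j ∈ Finset.Icc (1 : ℤ) (n : ℤ),
            (1 - a j) * (1 - a j / d) * (1 - c * b j) * (1 - α ^ 2 * d * b j / c) /
              ((1 - α * b j) * (1 - α * a j / c) * (1 - α * d * b j) *
                (1 - c * a j / (α * d))))
          - ∏ j ∈ Finset.Icc (-(m : ℤ)) (0 : ℤ),
              (1 - α * b j) * (1 - α * a j / c) * (1 - α * d * b j) *
                (1 - c * a j / (α * d)) /
                ((1 - a j) * (1 - a j / d) * (1 - c * b j) * (1 - α ^ 2 * d * b j / c))) :=
  chu_bibasic_summation_general m n α c d a b hα hc hd hcα hdc hpos hneg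
end

section
/- Chen's general bibasic summation: Let $n \ge 0$ be an integer, let $d$ be a complex number, and let $(a_j)_{j \ge 0}$ and $(B_j)_{j \ge 0}$ be sequences of complex numbers such that all factors occurring in denominators below are nonzero. Define $F(n) = \frac{(1-B_0)(1-dB_0)}{(1-B_n)(1-dB_n)}$ and $G(n) = \frac{\prod_{j=0}^{n-1}(1-a_j)(d-a_j)}{\prod_{j=1}^{n}(1-B_j)(1-dB_j)}$. Then $F(n) = \sum_{k=0}^{n} \frac{(1-a_k B_k)(dB_k - a_k)}{(1-a_0 B_n)(dB_n - a_0)} \cdot \frac{\prod_{j=0}^{k-1}(B_n - B_j)(1 - dB_n B_j)}{\prod_{j=1}^{k}(1 - B_n a_j)(dB_n - a_j)} \, G(k)$. -/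
set_option autoImplicit false

/-!
With `c k = (1 - B k)(1 - d B k)(1 - B n a k)(d B n - a k)` and
`β k = (B n - B k)(1 - d B n B k)(1 - a k)(d - a k)`, the polynomial identity
`c k - β k = (1 - a k B k)(d B k - a k)(1 - B n)(1 - d B n)` turns the `k`-th summand into
`(c k - β k) ∏_{j<k} β j / c (j+1)` up to a constant factor. These sums telescope to
`c 0 - β n ∏_{j<n} β j / c (j+1)`, and `β n = 0` because of its factor `B n - B n`.
-/

open Finset

theorem sum_range_succ_sub_mul_prod_div {K : Type*} [Field K] (c β : ℕ → K) (m : ℕ)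
    (hc : ∀ j < m, c (j + 1) ≠ 0) :
    ∑ k ∈ range (m + 1), (c k - β k) * ∏ j ∈ range k, β j / c (j + 1)
      = c 0 - β m * ∏ j ∈ range m, β j / c (j + 1) := by
  induction m with
  | zero => simp
  | succ m ih =>
    have hcm : c (m + 1) ≠ 0 := hc m m.lt_succ_self
    rw [sum_range_succ, ih fun j hj => hc j (hj.trans m.lt_succ_self), prod_range_succ]
    field_simp
    ring

theorem bibasic_factor_identity {R : Type*} [CommRing R] (d x y a : R) :
    (1 - x) * (1 - d * x) * ((1 - y * a) * (d * y - a))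
        - (y - x) * (1 - d * y * x) * ((1 - a) * (d - a))
      = (1 - a * x) * (d * x - a) * ((1 - y) * (1 - d * y)) := by
  ring

/-- Chen's general bibasic summation, Eq. (6.2). -/
theorem chen_general_bibasic_summation (n : ℕ) (d : ℂ) (a B : ℕ → ℂ)
    (hBn : (1 - B n) * (1 - d * B n) ≠ 0)
    (hB : ∀ j, 1 ≤ j → j ≤ n → (1 - B j) * (1 - d * B j) ≠ 0)
    (ha0 : (1 - a 0 * B n) * (d * B n - a 0) ≠ 0)
    (haj : ∀ j, 1 ≤ j → j ≤ n → (1 - B n * a j) * (d * B n - a j) ≠ 0) :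
    (1 - B 0) * (1 - d * B 0) / ((1 - B n) * (1 - d * B n))
    = ∑ k ∈ Finset.range (n + 1),
        (1 - a k * B k) * (d * B k - a k) / ((1 - a 0 * B n) * (d * B n - a 0)) *
          ((∏ j ∈ Finset.range k, (B n - B j) * (1 - d * B n * B j)) /
            ∏ j ∈ Finset.range k, (1 - B n * a (j + 1)) * (d * B n - a (j + 1))) *
          ((∏ j ∈ Finset.range k, (1 - a j) * (d - a j)) /
            ∏ j ∈ Finset.range k, (1 - B (j + 1)) * (1 - d * B (j + 1))) := by
  set N := B n
  set c : ℕ → ℂ := fun k => (1 - B k) * (1 - d * B k) * ((1 - N * a k) * (d * N - a k))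
  set β : ℕ → ℂ := fun k => (N - B k) * (1 - d * N * B k) * ((1 - a k) * (d - a k))
  have hc : ∀ j < n, c (j + 1) ≠ 0 := fun j hj =>
    mul_ne_zero (hB (j + 1) j.succ_pos hj) (haj (j + 1) j.succ_pos hj)
  have hβn : β n = 0 := by simp [β, N]
  have htel := sum_range_succ_sub_mul_prod_div c β n hc
  rw [hβn, zero_mul, sub_zero] at htel
  calc (1 - B 0) * (1 - d * B 0) / ((1 - N) * (1 - d * N))
      = c 0 / ((1 - N) * (1 - d * N) * ((1 - a 0 * N) * (d * N - a 0))) := by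
        have hc0 : c 0 = (1 - B 0) * (1 - d * B 0) * ((1 - a 0 * N) * (d * N - a 0)) := by
          simp only [c]
          ring
        rw [hc0, mul_div_mul_right _ _ ha0]
    _ = _ := by
        rw [← htel, sum_div]
        refine sum_congr rfl fun k _ => ?_
        simp only [c, β, bibasic_factor_identity, prod_div_distrib, prod_mul_distrib]
        rw [mul_right_comm _ ((1 - N) * (1 - d * N)),
          mul_comm ((1 - N) * (1 - d * N)), mul_div_mul_right _ _ hBn]
        ring
end

section
/- Chen's inverse bibasic summation: Let $n \ge 0$ be an integer, let $d$ be a complex number, and let $(a_j)_{j \ge 0}$ and $(B_j)_{j \ge 0}$ be sequences of complex numbers with the $B_j$ ($0 \le j \le n$) pairwise distinct and all factors occurring in denominators below nonzero. Define $F(n) = \frac{(1-B_0)(1-dB_0)}{(1-B_n)(1-dB_n)}$ and $G(n) = \frac{\prod_{j=0}^{n-1}(1-a_j)(d-a_j)}{\prod_{j=1}^{n}(1-B_j)(1-dB_j)}$. Then $G(n) = \sum_{k=0}^{n} \frac{\prod_{j=0}^{n-1}(1 - B_k a_j)(dB_k - a_j)}{\prod_{0 \le j \le n,\, j \ne k}(1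 - dB_k B_j)(B_k - B_j)} \, F(k)$. -/
set_option autoImplicit false

/-!
Write `c b = (1 - b)(1 - d b)`. The substitution `u = b / c b` turns the bibasic kernel into a
difference, `(1 - d b b')(b - b') = c b · c b' · (u - u')`, and the numerator
`∏ⱼ (1 - b aⱼ)(d b - aⱼ)` into `(c b)ⁿ g(u)` with `g(u) = ∏ⱼ ((1 - aⱼ)(d - aⱼ) u - aⱼ)`,
a polynomial of degree at most `n` whose coefficient of `uⁿ` is `∏ⱼ (1 - aⱼ)(d - aⱼ)`.
After these substitutions the sum is Lagrange's formula for that coefficient at the `n + 1`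
distinct nodes `B k / c (B k)`.
-/

open Finset Polynomial

variable {K : Type*} [Field K]

noncomputable def bibasicNode (d b : K) : K := b / ((1 - b) * (1 - d * b))

lemma one_sub_mul_mul_sub_eq_mul_bibasicNode_sub {d b b' : K}
    (hb : (1 - b) * (1 - d * b) ≠ 0) (hb' : (1 - b') * (1 - d * b') ≠ 0) :
    (1 - d * b * b') * (b - b') =
      (1 - b) * (1 - d * b) * ((1 - b') * (1 - d * b')) *
        (bibasicNode d b - bibasicNode d b') := by
  rw [bibasicNode, bibasicNode, div_sub_div _ _ hb hb', mul_div_cancel₀ _ (mul_ne_zero hb hb')]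
  ring

lemma bibasicNode_injOn {ι : Type*} {d : K} {B : ι → K} {s : Set ι}
    (hdist : ∀ i ∈ s, ∀ j ∈ s, i ≠ j → B i ≠ B j)
    (hB : ∀ k ∈ s, (1 - B k) * (1 - d * B k) ≠ 0)
    (hdB : ∀ k ∈ s, ∀ j ∈ s, j ≠ k → 1 - d * B k * B j ≠ 0) :
    Set.InjOn (fun k ↦ bibasicNode d (B k)) s := by
  intro i hi j hj (hij : bibasicNode d (B i) = bibasicNode d (B j))
  by_contra hne
  have hkernel := one_sub_mul_mul_sub_eq_mul_bibasicNode_sub (hB i hi) (hB j hj)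
  rw [hij, sub_self, mul_zero] at hkernel
  exact mul_ne_zero (hdB i hi j hj (Ne.symm hne)) (sub_ne_zero.mpr (hdist i hi j hj hne)) hkernel

noncomputable def chenPolynomial (d : K) (a : ℕ → K) (n : ℕ) : K[X] :=
  ∏ j ∈ range n, (C ((1 - a j) * (d - a j)) * X - C (a j))

lemma natDegree_C_mul_X_sub_C_le (α β : K) : (C α * X - C β).natDegree ≤ 1 := by
  compute_degree

lemma degree_chenPolynomial_lt (d : K) (a : ℕ → K) (n : ℕ) :
    (chenPolynomial d a n).degree < ↑(n + 1) := by
  have hnat : (chenPolynomial d a n).natDegree ≤ n := by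
    refine (natDegree_prod_le _ _).trans ?_
    simpa using sum_le_sum fun j (_ : j ∈ range n) ↦
      natDegree_C_mul_X_sub_C_le ((1 - a j) * (d - a j)) (a j)
  exact (degree_le_of_natDegree_le hnat).trans_lt (WithBot.coe_lt_coe.mpr n.lt_succ_self)

lemma coeff_chenPolynomial (d : K) (a : ℕ → K) (n : ℕ) :
    (chenPolynomial d a n).coeff n = ∏ j ∈ range n, (1 - a j) * (d - a j) := by
  have hprod := coeff_prod_of_natDegree_le (s := range n) _ 1
    fun j _ ↦ natDegree_C_mul_X_sub_C_le ((1 - a j) * (d - a j)) (a j)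
  rw [card_range, mul_one] at hprod
  rw [chenPolynomial, hprod]
  refine prod_congr rfl fun j _ ↦ ?_
  simp [coeff_C]

lemma pow_mul_eval_bibasicNode_chenPolynomial {d b : K} (hb : (1 - b) * (1 - d * b) ≠ 0)
    (a : ℕ → K) (n : ℕ) :
    ((1 - b) * (1 - d * b)) ^ n * (chenPolynomial d a n).eval (bibasicNode d b) =
      ∏ j ∈ range n, (1 - b * a j) * (d * b - a j) := by
  rw [chenPolynomial, eval_prod, pow_eq_prod_const, ← prod_mul_distrib]
  refine prod_congr rfl fun j _ ↦ ?_
  simp only [eval_sub, eval_mul, eval_C, eval_X, bibasicNode]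
  rw [mul_sub, mul_left_comm, mul_div_cancel₀ _ hb]
  ring

lemma chen_summand_eq {d x : K} {a B : ℕ → K} {n k : ℕ} {s : Finset ℕ} (hs : #s = n + 1)
    (hk : k ∈ s) (hB : ∀ j ∈ s, (1 - B j) * (1 - d * B j) ≠ 0) :
    (∏ j ∈ range n, (1 - B k * a j) * (d * B k - a j)) /
        (∏ j ∈ s.erase k, (1 - d * B k * B j) * (B k - B j)) *
        (x / ((1 - B k) * (1 - d * B k))) =
      (chenPolynomial d a n).eval (bibasicNode d (B k)) /
          (∏ j ∈ s.erase k, (bibasicNode d (B k) - bibasicNode d (B j))) *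
        (x / ∏ j ∈ s, (1 - B j) * (1 - d * B j)) := by
  set c : ℕ → K := fun j ↦ (1 - B j) * (1 - d * B j)
  have hkernel : ∏ j ∈ s.erase k, (1 - d * B k * B j) * (B k - B j) =
      c k ^ n * (∏ j ∈ s.erase k, c j) *
        ∏ j ∈ s.erase k, (bibasicNode d (B k) - bibasicNode d (B j)) := by
    rw [prod_congr rfl fun j hj ↦ one_sub_mul_mul_sub_eq_mul_bibasicNode_sub (hB k hk)
      (hB j (mem_of_mem_erase hj)), prod_mul_distrib, prod_mul_distrib, prod_const,
      card_erase_of_mem hk, hs, Nat.add_sub_cancel]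
  have hck : c k ≠ 0 := hB k hk
  have hc : ∏ j ∈ s.erase k, c j ≠ 0 := prod_ne_zero_iff.mpr fun j hj ↦ hB j (mem_of_mem_erase hj)
  rw [← pow_mul_eval_bibasicNode_chenPolynomial (hB k hk), hkernel, ← mul_prod_erase s c hk]
  change c k ^ n * _ / _ * (x / c k) = _
  clear_value c
  field_simp

/-- Chen's inverse bibasic summation, Eq. (6.3). -/
theorem chen_inverse_bibasic_summation (n : ℕ) (d : ℂ) (a B : ℕ → ℂ)
    (hdist : ∀ i ≤ n, ∀ j ≤ n, i ≠ j → B i ≠ B j)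
    (hB : ∀ k ≤ n, (1 - B k) * (1 - d * B k) ≠ 0)
    (hdB : ∀ k ≤ n, ∀ j ≤ n, j ≠ k → 1 - d * B k * B j ≠ 0) :
    (∏ j ∈ Finset.range n, (1 - a j) * (d - a j)) /
      ∏ j ∈ Finset.range n, (1 - B (j + 1)) * (1 - d * B (j + 1))
    = ∑ k ∈ Finset.range (n + 1),
        (∏ j ∈ Finset.range n, (1 - B k * a j) * (d * B k - a j)) /
          (∏ j ∈ (Finset.range (n + 1)).erase k, (1 - d * B k * B j) * (B k - B j)) *
          ((1 - B 0) * (1 - d * B 0) / ((1 - B k) * (1 - d * B k))) := by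
  simp only [← mem_range_succ_iff] at hdist hB hdB
  have hnodes : Set.InjOn (fun k ↦ bibasicNode d (B k)) ↑(range (n + 1)) :=
    bibasicNode_injOn (by simpa using hdist) (by simpa using hB) (by simpa using hdB)
  have hdeg : (chenPolynomial d a n).degree < #(range (n + 1)) := by
    simpa using degree_chenPolynomial_lt d a n
  rw [sum_congr rfl fun k hk ↦ chen_summand_eq (card_range _) hk hB, ← sum_mul,
    ← Lagrange.coeff_eq_sum hnodes hdeg, card_range, Nat.succ_sub_one, coeff_chenPolynomial,
    prod_range_succ' (fun j ↦ (1 - B j) * (1 - d * B j)), div_mul_cancel_right₀ (hB 0 (by simp)),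
    div_eq_mul_inv]
end
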